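/- arXiv:1910.07159 — 3 statements merged into one kernel-verified Lean document; each statement's English description precedes it below -/
import Mathlib

section
/- In a graph G=(V,E) with |V|=n, |E|=m, construct the HRLQ instance G' with, for each vertex v_i: a set H_i of q_i = |E_i|+1 hospitals each with quotas [0,1] and preference list r_i followed by the edge-residents of edges incident on v_i; a vertex-resident r_i with list H_i followed by X; for every edge e_j an edge-resident r'_j listing H_{j1} then H_{j2} (the hospital sets of its endpoints); and k hospitals X = {x_1,…,x_k} each with quotas [1,1] listing all vertex-residents. Then G has an independent set of size k if and only if G' admits a feasible envy-free matching of size m+n. -/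
/-- An HRLQ instance: bipartite graph on residents `R` and hospitals `H` with
strict preferences encoded as rank functions (lower rank = more preferred)
and lower/upper quotas per hospital. -/
structure HRLQ (R H : Type) where
  E : R → H → Prop
  rPref : R → H → ℕ
  hPref : H → R → ℕ
  lq : H → ℕ
  uq : H → ℕ

namespace HRLQ

variable {R H : Type}

/-- residents matched to hospital `h` -/
def matchedTo (M : R → Option H) (h : H) : Set R := {r | M r = some h}

/-- size of a matching -/
noncomputable def msize (M : R → Option H) : ℕ := {r | M r ≠ none}.ncard

variable (I : HRLQ R H)

/-- resident `r` strictly prefers hospital `h` to assignment `o`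
    (being unmatched is least preferred); `h` must be acceptable to `r`. -/
def PrefersH (r : R) (h : H) (o : Option H) : Prop :=
  I.E r h ∧ ∀ h', o = some h' → I.rPref r h < I.rPref r h'

def IsMatching (M : R → Option H) : Prop :=
  (∀ r h, M r = some h → I.E r h) ∧ ∀ h, (matchedTo M h).ncard ≤ I.uq h

def Feasible (M : R → Option H) : Prop :=
  ∀ h, I.lq h ≤ (matchedTo M h).ncard

def Blocks (M : R → Option H) (r : R) (h : H) : Prop :=
  I.E r h ∧ M r ≠ some h ∧ I.PrefersH r h (M r) ∧
    ((matchedTo M h).ncard < I.uq h ∨ ∃ r' ∈ matchedTo M h, I.hPref h r < I.hPref h r')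

def Stable (M : R → Option H) : Prop := ∀ r h, ¬ I.Blocks M r h

def Envies (M : R → Option H) (r r' : R) : Prop :=
  ∃ h, M r' = some h ∧ I.PrefersH r h (M r) ∧ I.hPref h r < I.hPref h r'

def EnvyFree (M : R → Option H) : Prop := ∀ r r', ¬ I.Envies M r r'

def RelaxedStable (M : R → Option H) : Prop :=
  (∀ h, {r | r ∈ matchedTo M h ∧ ∃ h', I.Blocks M r h'}.ncard ≤ I.lq h) ∧
  ∀ r, M r = none → ∀ h, ¬ I.Blocks M r h

/-- preferences are strict -/
def StrictPrefs : Prop :=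
  (∀ r, Function.Injective (I.rPref r)) ∧ ∀ h, Function.Injective (I.hPref h)

end HRLQ

/-!
Given an independent set `S` with `|S| = k`, send the vertex-residents of `S` to `X`, every other
vertex-resident to its own block `H_v`, and every edge-resident to the block of its preferred
endpoint outside `S`; such an endpoint exists because `S` is independent. This splits residents and
hospitals into markets (`X` and the blocks `H_v`), each with at least as many hospitals as
residents, and inside each market deferred acceptance gives a stable injection. Stability rules out
envy within a market, and the preference lists rule it out across markets.

Conversely, a matching of size `m + n` matches everybody, the lower quotas of `X` are met by `k`
vertex-residents, and these form an independent set: if two of them were adjacent, their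
edge-resident would sit in the block of one of them, who prefers that block to `X` and whom the
block prefers to the edge-resident.
-/

open Function Finset

section StableInjection

variable {A B α β : Type*} [LinearOrder α] [LinearOrder β]

def IsStableInjection (ra : A → B → α) (rb : B → A → β) (f : A → B) : Prop :=
  Injective f ∧ ∀ a b, ra a b < ra a (f a) → ∃ a', f a' = b ∧ rb b a' < rb b a

namespace DeferredAcceptance

variable (ra : A → B → α) (rb : B → A → β)

/-- `rej a` is the set of those `b` that have rejected `a`. -/
def Proposes (rej : A → Finset B) (a : A) (b : B) : Prop :=
  b ∉ rej a ∧ ∀ b', ra a b' < ra a b → b' ∈ rej a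

def Justified (rej : A → Finset B) : Prop :=
  ∀ a, ∀ b ∈ rej a, ∃ a', Proposes ra rej a' b ∧ rb b a' < rb b a

variable {ra rb} {rej : A → Finset B}

theorem Proposes.unique (hra : ∀ a, Injective (ra a)) {a : A} {b₁ b₂ : B}
    (h₁ : Proposes ra rej a b₁) (h₂ : Proposes ra rej a b₂) : b₁ = b₂ := by
  by_contra hne
  rcases lt_or_gt_of_ne ((hra a).ne hne) with h | h
  · exact h₁.1 (h₂.2 _ h)
  · exact h₂.1 (h₁.2 _ h)

theorem exists_proposes [Fintype B] [DecidableEq B] {a : A} (h : rej a ≠ univ) :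
    ∃ b, Proposes ra rej a b := by
  obtain ⟨b, hb, hmin⟩ := (rej a)ᶜ.exists_min_image (ra a)
    (by rwa [nonempty_iff_ne_empty, Ne, compl_eq_empty_iff])
  refine ⟨b, mem_compl.mp hb, fun b' hlt => by_contra fun hb' => ?_⟩
  exact (hmin b' (mem_compl.mpr hb')).not_gt hlt

/-- Nobody is rejected everywhere: the `b`'s would be held by pairwise distinct proposers other
than `a`. -/
theorem Justified.ne_univ [Fintype A] [Fintype B] (hra : ∀ a, Injective (ra a))
    (hcard : Fintype.card A ≤ Fintype.card B) (h : Justified ra rb rej) (a : A) :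
    rej a ≠ univ := by
  intro hall
  choose w hw using fun b => (h a b (hall ▸ mem_univ b)).imp fun _ hp => hp.1
  have hw_inj : Injective w := fun b₁ b₂ heq => (hw b₁).unique hra (heq ▸ hw b₂)
  have ha : a ∉ Set.range w := by
    rintro ⟨b, rfl⟩
    exact (hw b).1 (hall ▸ mem_univ b)
  exact (Fintype.card_lt_of_injective_of_notMem w hw_inj ha).not_ge hcard

theorem mem_update_insert [DecidableEq A] [DecidableEq B] {a₀ a : A} {b b' : B} :
    b' ∈ update rej a₀ (insert b (rej a₀)) a ↔ (a = a₀ ∧ b' = b) ∨ b' ∈ rej a := by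
  rcases eq_or_ne a a₀ with rfl | ha <;> simp [*]

theorem Justified.reject [DecidableEq A] [DecidableEq B] (h : Justified ra rb rej)
    {a₀ a₁ : A} {b : B} (hprop : Proposes ra rej a₁ b) (hpref : rb b a₁ < rb b a₀) :
    Justified ra rb (update rej a₀ (insert b (rej a₀))) := by
  have hne : a₁ ≠ a₀ := by
    rintro rfl
    exact hpref.false
  have hkeep : ∀ a b', Proposes ra rej a b' → ¬ (a = a₀ ∧ b' = b) →
      Proposes ra (update rej a₀ (insert b (rej a₀))) a b' := fun a b' hp hab =>
    ⟨by simp [mem_update_insert, hab, hp.1],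
      fun b'' hlt => mem_update_insert.mpr (.inr (hp.2 b'' hlt))⟩
  have hprop' := hkeep a₁ b hprop (fun h => hne h.1)
  intro a b' hb'
  rcases mem_update_insert.mp hb' with ⟨rfl, rfl⟩ | hb'
  · exact ⟨a₁, hprop', hpref⟩
  obtain ⟨a', hp, hlt⟩ := h a b' hb'
  by_cases hab : a' = a₀ ∧ b' = b
  · obtain ⟨rfl, rfl⟩ := hab
    exact ⟨a₁, hprop', hpref.trans hlt⟩
  · exact ⟨a', hkeep a' b' hp hab, hlt⟩

theorem sum_card_compl_update_insert_lt [Fintype A] [Fintype B] [DecidableEq A] [DecidableEq B]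
    {a₀ : A} {b : B} (hb : b ∉ rej a₀) :
    ∑ a, (update rej a₀ (insert b (rej a₀)) a)ᶜ.card < ∑ a, (rej a)ᶜ.card := by
  refine sum_lt_sum (fun a _ => card_le_card (compl_subset_compl.mpr fun b' hb' =>
    mem_update_insert.mpr (.inr hb'))) ⟨a₀, mem_univ _, ?_⟩
  rw [update_self, compl_insert]
  exact card_erase_lt_of_mem (mem_compl.mpr hb)

theorem Justified.exists_isStableInjection [Fintype A] [Fintype B] [DecidableEq A]
    [DecidableEq B] (hra : ∀ a, Injective (ra a)) (hrb : ∀ b, Injective (rb b))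
    (hcard : Fintype.card A ≤ Fintype.card B) {rej : A → Finset B} (h : Justified ra rb rej) :
    ∃ f, IsStableInjection ra rb f := by
  choose cur hcur using fun a => exists_proposes (ra := ra) (h.ne_univ hra hcard a)
  by_cases hinj : Injective cur
  · refine ⟨cur, hinj, fun a b hlt => ?_⟩
    obtain ⟨a', hp, hpref⟩ := h a b ((hcur a).2 b hlt)
    exact ⟨a', (hcur a').unique hra hp, hpref⟩
  obtain ⟨a₁, a₂, hcur₁₂, hne⟩ : ∃ a₁ a₂, cur a₁ = cur a₂ ∧ a₁ ≠ a₂ := by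
    simpa [Injective] using hinj
  -- the common target of `a₁` and `a₂` rejects the one it ranks lower
  obtain ⟨a₀, a₁, b, hp₀, hp₁, hpref⟩ : ∃ a₀ a₁ b,
      Proposes ra rej a₀ b ∧ Proposes ra rej a₁ b ∧ rb b a₁ < rb b a₀ := by
    rcases lt_or_gt_of_ne ((hrb (cur a₁)).ne hne) with hlt | hlt
    · exact ⟨a₂, a₁, cur a₁, hcur₁₂ ▸ hcur a₂, hcur a₁, hlt⟩
    · exact ⟨a₁, a₂, cur a₁, hcur a₁, hcur₁₂ ▸ hcur a₂, hlt⟩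
  have := sum_card_compl_update_insert_lt hp₀.1
  exact (h.reject hp₁ hpref).exists_isStableInjection hra hrb hcard
termination_by ∑ a, (rej a)ᶜ.card

end DeferredAcceptance

theorem exists_isStableInjection [Fintype A] [Fintype B] {ra : A → B → α} {rb : B → A → β}
    (hra : ∀ a, Injective (ra a)) (hrb : ∀ b, Injective (rb b))
    (hcard : Fintype.card A ≤ Fintype.card B) : ∃ f, IsStableInjection ra rb f := by
  classical
  exact DeferredAcceptance.Justified.exists_isStableInjection (rej := fun _ => ∅) hra hrb hcard
    fun _ _ hb => absurd hb (notMem_empty _)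

end StableInjection

section Markets

variable {R H ι : Type*} [Fintype R] [Fintype H] [DecidableEq ι] {mR : R → ι} {mH : H → ι}

theorem exists_stable_assignment {α β : Type*} [LinearOrder α] [LinearOrder β]
    {rR : R → H → α} {rH : H → R → β} (hR : ∀ r, Injective (rR r))
    (hH : ∀ h, Injective (rH h))
    (hcard : ∀ i, Fintype.card {r // mR r = i} ≤ Fintype.card {h // mH h = i}) :
    ∃ μ : R → H, (∀ r, mH (μ r) = mR r) ∧ Injective μ ∧
      ∀ r h, mH h = mR r → rR r h < rR r (μ r) → ∃ r', μ r' = h ∧ rH h r' < rH h r := by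
  choose f hf using fun i => exists_isStableInjection
    (ra := fun (r : {r // mR r = i}) (h : {h // mH h = i}) => rR r.1 h.1)
    (rb := fun h r => rH h.1 r.1)
    (fun r _ _ hh => Subtype.ext (hR r.1 hh)) (fun h _ _ hr => Subtype.ext (hH h.1 hr)) (hcard i)
  set μ : R → H := fun r => f (mR r) ⟨r, rfl⟩
  have hμ : ∀ i r (hr : mR r = i), μ r = f i ⟨r, hr⟩ := by
    rintro _ r rfl
    rfl
  have hμm : ∀ r, mH (μ r) = mR r := fun r => (f _ _).2
  refine ⟨μ, hμm, fun r r' heq => ?_, fun r h hh hlt => ?_⟩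
  · have hm : mR r' = mR r := (hμm r').symm.trans (heq ▸ hμm r)
    rw [hμ _ r rfl, hμ _ r' hm] at heq
    exact congrArg Subtype.val ((hf _).1 (Subtype.ext heq))
  · obtain ⟨⟨r', hr'⟩, hfr', hpref⟩ := (hf (mR r)).2 ⟨r, rfl⟩ ⟨h, hh⟩ hlt
    exact ⟨r', by rw [hμ _ r' hr', hfr'], hpref⟩

theorem exists_apply_eq_of_card_fiber_le {μ : R → H} (hμm : ∀ r, mH (μ r) = mR r)
    (hμ : Injective μ) {i : ι}
    (hcard : Fintype.card {h // mH h = i} ≤ Fintype.card {r // mR r = i}) {h : H}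
    (hh : mH h = i) : ∃ r, μ r = h := by
  let g : {r // mR r = i} → {h // mH h = i} := fun r => ⟨μ r, (hμm r).trans r.2⟩
  have hg : Injective g := fun r r' h => Subtype.ext (hμ (congrArg Subtype.val h))
  obtain ⟨r, hr⟩ := ((Fintype.bijective_iff_injective_and_card g).mpr
    ⟨hg, (Fintype.card_le_of_injective g hg).antisymm hcard⟩).2 ⟨h, hh⟩
  exact ⟨r, congrArg Subtype.val hr⟩

end Markets

namespace HRLQ

variable {R H ι : Type} {I : HRLQ R H}

theorem msize_eq_card_iff [Fintype R] {M : R → Option H} :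
    msize M = Fintype.card R ↔ ∀ r, M r ≠ none := by
  classical
  rw [msize, Set.ncard_eq_toFinset_card', Finset.card_eq_iff_eq_univ]
  simp [Finset.eq_univ_iff_forall]

theorem Feasible.exists_matched {M : R → Option H} (hF : I.Feasible M) {h : H}
    (hlq : I.lq h ≠ 0) : ∃ r, M r = some h :=
  Set.nonempty_of_ncard_ne_zero (Nat.pos_iff_ne_zero.mp ((Nat.pos_of_ne_zero hlq).trans_le (hF h)))

theorem isMatching_comp_some {μ : R → H} (hE : ∀ r, I.E r (μ r)) (hμ : Injective μ)
    (huq : ∀ h, 1 ≤ I.uq h) : I.IsMatching (some ∘ μ) := by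
  refine ⟨fun r h hr => Option.some_injective _ hr ▸ hE r, fun h => le_trans ?_ (huq h)⟩
  have hs : (matchedTo (some ∘ μ) h).Subsingleton := fun r hr r' hr' =>
    hμ (Option.some_injective _ (hr.trans hr'.symm))
  exact (Set.ncard_le_one hs.finite).mpr fun _ ha _ hb => hs ha hb

theorem envyFree_comp_some_of_stable [DecidableEq ι] {mR : R → ι} {mH : H → ι} {μ : R → H}
    (hμm : ∀ r, mH (μ r) = mR r) (hμ : Injective μ)
    (hstable : ∀ r h, mH h = mR r → I.rPref r h < I.rPref r (μ r) →
      ∃ r', μ r' = h ∧ I.hPref h r' < I.hPref h r)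
    (hcross : ∀ r r', mR r' ≠ mR r → I.E r (μ r') →
      ¬ I.rPref r (μ r') < I.rPref r (μ r)) :
    I.EnvyFree (some ∘ μ) := by
  rintro r r' ⟨h, hr', ⟨hE, hpref⟩, hlt⟩
  obtain rfl : μ r' = h := Option.some_injective _ hr'
  have hpref := hpref _ rfl
  by_cases hm : mR r' = mR r
  · obtain ⟨r'', hr'', hlt'⟩ := hstable r (μ r') ((hμm r').trans hm) hpref
    obtain rfl := hμ hr''
    exact lt_asymm hlt hlt'
  · exact hcross r r' hm hE hpref

end HRLQ

namespace SimpleGraph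

theorem IsIndepSet.exists_endpoint_notMem {V : Type*} {G : SimpleGraph V} {s : Set V}
    (hs : G.IsIndepSet s) {e : Sym2 V} (he : e ∈ G.edgeSet) (before : V → V → Prop)
    (htotal : ∀ u w, u ∈ e → w ∈ e → u ≠ w → before u w ∨ before w u) :
    ∃ a ∈ e, a ∉ s ∧ ∀ u ∈ e, u ∉ s → u ≠ a → before a u := by
  induction e using Sym2.ind with | h x y => ?_
  have key : ∀ a b, G.Adj a b → before a b →
      ∃ c ∈ s(a, b), c ∉ s ∧ ∀ u ∈ s(a, b), u ∉ s → u ≠ c → before c u := by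
    intro a b hab hbefore
    by_cases ha : a ∈ s
    · have hb : b ∉ s := fun hb => hs ha hb hab.ne hab
      refine ⟨b, Sym2.mem_mk_right a b, hb, fun u hu hus hub => ?_⟩
      rcases Sym2.mem_iff.mp hu with rfl | rfl <;> contradiction
    · refine ⟨a, Sym2.mem_mk_left a b, ha, fun u hu _ hua => ?_⟩
      rcases Sym2.mem_iff.mp hu with rfl | rfl
      exacts [absurd rfl hua, hbefore]
  have hxy : G.Adj x y := he
  rcases htotal x y (Sym2.mem_mk_left x y) (Sym2.mem_mk_right x y) hxy.ne with h | h
  · exact key x y hxy h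
  · rw [Sym2.eq_swap]
    exact key y x hxy.symm h

theorem card_sum_edgeSet {V : Type} [Fintype V] (G : SimpleGraph V) [DecidableRel G.Adj] :
    Fintype.card (V ⊕ G.edgeSet) = G.edgeFinset.card + Fintype.card V := by
  rw [Fintype.card_sum, G.edgeFinset_card, add_comm]

theorem card_edgeSet_fiber_le_degree {V : Type} [Fintype V] [DecidableEq V] (G : SimpleGraph V)
    [DecidableRel G.Adj] {f : G.edgeSet → V} (hf : ∀ e, f e ∈ e.1) (v : V) :
    Fintype.card {e // f e = v} ≤ G.degree v := by
  rw [← G.card_incidenceSet_eq_degree]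
  refine Fintype.card_le_of_injective (fun e => ⟨e.1.1, e.1.2, by simpa [e.2] using hf e.1⟩)
    fun e e' h => ?_
  exact Subtype.ext (Subtype.ext (congrArg Subtype.val h :))

end SimpleGraph

section ReductionMarkets

variable {V X E : Type} {β : V → Type}

/-- `none` is the market of the hospitals `X`, `some v` that of the block `H_v`; the
edge-resident `e` competes for the block of `asg e`. -/
def blockMarket : (Σ v, β v) ⊕ X → Option V :=
  Sum.elim (fun h => some h.1) fun _ => none

def residentMarket [DecidableEq V] (S : Finset V) (asg : E → V) : V ⊕ E → Option V :=
  Sum.elim (fun v => if v ∈ S then none else some v) fun e => some (asg e)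

theorem blockMarket_eq_some_iff {h : (Σ v, β v) ⊕ X} {v : V} :
    blockMarket h = some v ↔ ∃ t, h = .inl ⟨v, t⟩ := by
  rcases h with ⟨u, t⟩ | j
  · simp only [blockMarket, Sum.elim_inl, Option.some.injEq, Sum.inl.injEq]
    constructor
    · rintro rfl
      exact ⟨t, rfl⟩
    · rintro ⟨t', h⟩
      exact congrArg Sigma.fst h
  · simp [blockMarket]

theorem blockMarket_eq_none_iff {h : (Σ v, β v) ⊕ X} :
    blockMarket h = none ↔ ∃ j, h = .inr j := by
  rcases h with ⟨u, t⟩ | j <;> simp [blockMarket]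

theorem card_blockMarket_none [Fintype V] [∀ v, Fintype (β v)] [Fintype X] :
    Fintype.card {h : (Σ v, β v) ⊕ X // blockMarket h = none} = Fintype.card X := by
  rw [Fintype.card_of_subtype (univ.map .inr) (by simp [blockMarket_eq_none_iff])]
  simp

theorem card_blockMarket_some [Fintype V] [DecidableEq V] [∀ v, Fintype (β v)] [Fintype X]
    (v : V) :
    Fintype.card {h : (Σ v, β v) ⊕ X // blockMarket h = some v} = Fintype.card (β v) := by
  rw [Fintype.card_of_subtype (univ.map ((Embedding.sigmaMk v).trans .inl))
    (by simp [blockMarket_eq_some_iff, eq_comm])]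
  simp

variable [DecidableEq V] {S : Finset V} {asg : E → V}

theorem notMem_of_residentMarket_eq_some (hasg : ∀ e, asg e ∉ S) {r : V ⊕ E} {v : V}
    (hr : residentMarket S asg r = some v) : v ∉ S := by
  rcases r with u | e
  · by_cases hu : u ∈ S <;> simp_all [residentMarket]
  · simp only [residentMarket, Sum.elim_inr, Option.some.injEq] at hr
    exact hr ▸ hasg e

variable [Fintype V] [Fintype E]

theorem card_residentMarket_none :
    Fintype.card {r // residentMarket S asg r = none} = S.card := by
  rw [Fintype.card_of_subtype (S.map .inl)]
  · simp
  · rintro (v | e) <;> simp [residentMarket]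

theorem card_residentMarket_some_le [DecidableEq E] (v : V) :
    Fintype.card {r // residentMarket S asg r = some v} ≤ Fintype.card {e // asg e = v} + 1 := by
  rw [Fintype.card_subtype, Fintype.card_subtype]
  calc _ ≤ (insert (Sum.inl v) ((univ.filter (asg · = v)).map .inr)).card := by
        refine card_le_card fun r hr => ?_
        rw [mem_filter] at hr
        rcases r with u | e <;> simp [residentMarket] at hr ⊢
        · exact mem_insert.mpr (.inl (congrArg _ hr.2))
        · exact mem_insert.mpr (.inr (mem_map_of_mem _ (mem_filter.mpr ⟨mem_univ _, hr⟩)))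
    _ ≤ _ := by
        refine (card_insert_le _ _).trans ?_
        rw [card_map]

end ReductionMarkets

structure IsIndepSetReduction {V : Type} [Fintype V] [DecidableEq V] (G : SimpleGraph V)
    [DecidableRel G.Adj] (k : ℕ)
    (I : HRLQ (V ⊕ G.edgeSet) ((Σ v : V, Fin (G.degree v + 1)) ⊕ Fin k)) : Prop where
  strict : I.StrictPrefs
  vertex_acc_block : ∀ v u (t : Fin (G.degree u + 1)), I.E (.inl v) (.inl ⟨u, t⟩) ↔ u = v
  vertex_acc_X : ∀ v (j : Fin k), I.E (.inl v) (.inr j)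
  edge_acc_block : ∀ (e : G.edgeSet) u (t : Fin (G.degree u + 1)),
    I.E (.inr e) (.inl ⟨u, t⟩) ↔ u ∈ e.1
  edge_not_acc_X : ∀ (e : G.edgeSet) (j : Fin k), ¬ I.E (.inr e) (.inr j)
  vertex_prefers_block : ∀ v (t : Fin (G.degree v + 1)) (j : Fin k),
    I.rPref (.inl v) (.inl ⟨v, t⟩) < I.rPref (.inl v) (.inr j)
  edge_blocks_ordered : ∀ (e : G.edgeSet) u w, u ∈ e.1 → w ∈ e.1 → u ≠ w →
    (∀ (t : Fin (G.degree u + 1)) (t' : Fin (G.degree w + 1)),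
      I.rPref (.inr e) (.inl ⟨u, t⟩) < I.rPref (.inr e) (.inl ⟨w, t'⟩)) ∨
    (∀ (t : Fin (G.degree w + 1)) (t' : Fin (G.degree u + 1)),
      I.rPref (.inr e) (.inl ⟨w, t⟩) < I.rPref (.inr e) (.inl ⟨u, t'⟩))
  block_prefers_vertex : ∀ v (t : Fin (G.degree v + 1)) (e : G.edgeSet), v ∈ e.1 →
    I.hPref (.inl ⟨v, t⟩) (.inl v) < I.hPref (.inl ⟨v, t⟩) (.inr e)
  block_quota : ∀ v (t : Fin (G.degree v + 1)),
    I.lq (.inl ⟨v, t⟩) = 0 ∧ I.uq (.inl ⟨v, t⟩) = 1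
  X_quota : ∀ j : Fin k, I.lq (.inr j) = 1 ∧ I.uq (.inr j) = 1

namespace IsIndepSetReduction

variable {V : Type} [Fintype V] [DecidableEq V] {G : SimpleGraph V} [DecidableRel G.Adj] {k : ℕ}
  {I : HRLQ (V ⊕ G.edgeSet) ((Σ v : V, Fin (G.degree v + 1)) ⊕ Fin k)}

theorem uq_eq_one (hI : IsIndepSetReduction G k I) : ∀ h, I.uq h = 1
  | .inl ⟨v, t⟩ => (hI.block_quota v t).2
  | .inr j => (hI.X_quota j).2

theorem acceptable_of_market (hI : IsIndepSetReduction G k I) {S : Finset V} {asg : G.edgeSet → V}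
    (hasg : ∀ e, asg e ∈ e.1) {r h} (hm : blockMarket h = residentMarket S asg r) :
    I.E r h := by
  rcases r with v | e
  · by_cases hv : v ∈ S
    · obtain ⟨j, rfl⟩ := blockMarket_eq_none_iff.mp (by simpa [residentMarket, hv] using hm)
      exact hI.vertex_acc_X v j
    · obtain ⟨t, rfl⟩ := blockMarket_eq_some_iff.mp (by simpa [residentMarket, hv] using hm)
      exact (hI.vertex_acc_block v v t).mpr rfl
  · obtain ⟨t, rfl⟩ := blockMarket_eq_some_iff.mp (by simpa [residentMarket] using hm)
    exact (hI.edge_acc_block e _ t).mpr (hasg e)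

theorem not_prefers_other_market (hI : IsIndepSetReduction G k I) {S : Finset V}
    {asg : G.edgeSet → V} (hasg_notMem : ∀ e, asg e ∉ S)
    (hasg_pref : ∀ e : G.edgeSet, ∀ u ∈ e.1, u ∉ S → u ≠ asg e →
      ∀ (t : Fin (G.degree (asg e) + 1)) (t' : Fin (G.degree u + 1)),
        I.rPref (.inr e) (.inl ⟨asg e, t⟩) < I.rPref (.inr e) (.inl ⟨u, t'⟩))
    {μ : V ⊕ G.edgeSet → (Σ v : V, Fin (G.degree v + 1)) ⊕ Fin k}
    (hμm : ∀ r, blockMarket (μ r) = residentMarket S asg r) {r r' : V ⊕ G.edgeSet}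
    (hne : residentMarket S asg r' ≠ residentMarket S asg r) (hE : I.E r (μ r')) :
    ¬ I.rPref r (μ r') < I.rPref r (μ r) := by
  have hr' := hμm r'
  rcases r with v | e <;> rcases hμr' : μ r' with ⟨u, t⟩ | j <;> rw [hμr'] at hE hr'
  · obtain rfl := (hI.vertex_acc_block v u t).mp hE
    have hu : u ∉ S := notMem_of_residentMarket_eq_some hasg_notMem hr'.symm
    exact absurd (hr'.symm.trans (by simp [blockMarket, residentMarket, hu])) hne
  · by_cases hv : v ∈ S
    · exact absurd (hr'.symm.trans (by simp [residentMarket, hv, blockMarket])) hne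
    · obtain ⟨t, ht⟩ := blockMarket_eq_some_iff.mp ((hμm (.inl v)).trans (if_neg hv))
      rw [ht]
      exact (hI.vertex_prefers_block v t j).not_gt
  · have hu : u ∈ e.1 := (hI.edge_acc_block e u t).mp hE
    have huS : u ∉ S := notMem_of_residentMarket_eq_some hasg_notMem hr'.symm
    have hua : u ≠ asg e := by
      rintro rfl
      exact hne hr'.symm
    obtain ⟨t', ht'⟩ := blockMarket_eq_some_iff.mp (hμm (.inr e))
    rw [ht']
    exact (hasg_pref e u hu huS hua t' t).not_gt
  · exact absurd hE (hI.edge_not_acc_X e j)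

theorem exists_envyFree_of_isIndepSet (hI : IsIndepSetReduction G k I) {S : Finset V}
    (hS : G.IsIndepSet S) (hk : S.card = k) :
    ∃ M, I.IsMatching M ∧ I.Feasible M ∧ I.EnvyFree M ∧
      HRLQ.msize M = G.edgeFinset.card + Fintype.card V := by
  choose asg hasg_mem hasg_notMem hasg_pref using fun e : G.edgeSet =>
    hS.exists_endpoint_notMem e.2 _ (hI.edge_blocks_ordered e)
  have hnone : Fintype.card {r // residentMarket S asg r = none} =
      Fintype.card {h : (Σ v : V, Fin (G.degree v + 1)) ⊕ Fin k // blockMarket h = none} := by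
    rw [card_residentMarket_none, card_blockMarket_none, hk, Fintype.card_fin]
  have hcard : ∀ i, Fintype.card {r // residentMarket S asg r = i} ≤
      Fintype.card {h : (Σ v : V, Fin (G.degree v + 1)) ⊕ Fin k // blockMarket h = i} := by
    rintro (_ | v)
    · exact hnone.le
    · refine (card_residentMarket_some_le v).trans ?_
      rw [card_blockMarket_some, Fintype.card_fin]
      exact Nat.add_le_add_right (G.card_edgeSet_fiber_le_degree hasg_mem v) 1
  obtain ⟨μ, hμm, hμ, hstable⟩ := exists_stable_assignment hI.strict.1 hI.strict.2 hcard
  refine ⟨some ∘ μ, ?_, ?_, ?_, ?_⟩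
  · exact HRLQ.isMatching_comp_some (fun r => hI.acceptable_of_market hasg_mem (hμm r)) hμ
      fun h => (hI.uq_eq_one h).ge
  · rintro (⟨v, t⟩ | j)
    · simp [(hI.block_quota v t).1]
    · obtain ⟨r, hr⟩ := exists_apply_eq_of_card_fiber_le hμm hμ hnone.ge
        (blockMarket_eq_none_iff.mpr ⟨j, rfl⟩)
      rw [(hI.X_quota j).1]
      exact (Set.ncard_pos).mpr ⟨r, congrArg some hr⟩
  · exact HRLQ.envyFree_comp_some_of_stable hμm hμ hstable
      fun _ _ => hI.not_prefers_other_market hasg_notMem hasg_pref hμm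
  · rw [(HRLQ.msize_eq_card_iff (M := some ∘ μ)).mpr fun r => Option.some_ne_none _,
      G.card_sum_edgeSet]

theorem vertex_envies_edge (hI : IsIndepSetReduction G k I) {M : V ⊕ G.edgeSet → Option _} {v : V}
    {j : Fin k} {e : G.edgeSet} {t : Fin (G.degree v + 1)} (hv : M (.inl v) = some (.inr j))
    (he : M (.inr e) = some (.inl ⟨v, t⟩)) (hve : v ∈ e.1) :
    I.Envies M (.inl v) (.inr e) := by
  refine ⟨_, he, ⟨(hI.vertex_acc_block v v t).mpr rfl, fun h hh => ?_⟩,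
    hI.block_prefers_vertex v t e hve⟩
  cases hv.symm.trans hh
  exact hI.vertex_prefers_block v t j

theorem exists_isIndepSet_of_envyFree (hI : IsIndepSetReduction G k I) {M : V ⊕ G.edgeSet → Option _}
    (hM : I.IsMatching M) (hF : I.Feasible M) (hEF : I.EnvyFree M)
    (hsize : HRLQ.msize M = G.edgeFinset.card + Fintype.card V) :
    ∃ S : Finset V, S.card = k ∧ ∀ u ∈ S, ∀ w ∈ S, ¬ G.Adj u w := by
  have hall : ∀ r, M r ≠ none := HRLQ.msize_eq_card_iff.mp (hsize.trans G.card_sum_edgeSet.symm)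
  have hX : ∀ j, ∃ v, M (.inl v) = some (.inr j) := fun j => by
    obtain ⟨v | e, hr⟩ := hF.exists_matched (h := .inr j) (by simp [(hI.X_quota j).1])
    · exact ⟨v, hr⟩
    · exact absurd (hM.1 _ _ hr) (hI.edge_not_acc_X e j)
  choose x hx using hX
  have hx_inj : Injective x := fun j j' h =>
    Sum.inr_injective (Option.some_injective _ ((hx j).symm.trans (h ▸ hx j')))
  refine ⟨univ.image x, ?_, ?_⟩
  · rw [card_image_of_injective _ hx_inj, card_univ, Fintype.card_fin]
  intro u hu w hw hadj
  obtain ⟨h, hh⟩ := Option.ne_none_iff_exists'.mp (hall (.inr ⟨s(u, w), hadj⟩))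
  rcases h with ⟨z, t⟩ | j
  · have hz : z ∈ s(u, w) := (hI.edge_acc_block _ z t).mp (hM.1 _ _ hh)
    obtain ⟨j, -, rfl⟩ : ∃ j ∈ univ, x j = z := mem_image.mp <| by
      rcases Sym2.mem_iff.mp hz with rfl | rfl <;> assumption
    exact hEF _ _ (hI.vertex_envies_edge (hx j) hh hz)
  · exact hI.edge_not_acc_X _ j (hM.1 _ _ hh)

end IsIndepSetReduction

/-- Reduction from Independent Set to MAXEFM with all quotas at most one: G has an
independent set of size k iff the reduced HRLQ instance (with hospital sets
Hᵢ of size |Eᵢ|+1 with quotas [0,1] per vertex, vertex-residents listing Hᵢ then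
X, edge-residents listing the two endpoint hospital sets blockwise, and k
hospitals X with quotas [1,1] listing all vertex-residents) admits a feasible
envy-free matching of size m + n. -/
theorem ind_set_iff_envy_free_unit_quotas
    {V : Type} [Fintype V] [DecidableEq V]
    (G : SimpleGraph V) [DecidableRel G.Adj] (k : ℕ)
    (I : HRLQ (V ⊕ {e : Sym2 V // e ∈ G.edgeSet})
              ((Σ v : V, Fin (G.degree v + 1)) ⊕ Fin k))
    (hstrict : I.StrictPrefs)
    -- acceptability structure
    (hE1 : ∀ v u (t : Fin (G.degree u + 1)),
      I.E (Sum.inl v) (Sum.inl ⟨u, t⟩) ↔ u = v)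
    (hE2 : ∀ v (j : Fin k), I.E (Sum.inl v) (Sum.inr j))
    (hE3 : ∀ (e : {e : Sym2 V // e ∈ G.edgeSet}) u (t : Fin (G.degree u + 1)),
      I.E (Sum.inr e) (Sum.inl ⟨u, t⟩) ↔ u ∈ e.1)
    (hE4 : ∀ (e : {e : Sym2 V // e ∈ G.edgeSet}) (j : Fin k),
      ¬ I.E (Sum.inr e) (Sum.inr j))
    -- vertex-resident v lists all of H_v before all of X
    (hr1 : ∀ v (t : Fin (G.degree v + 1)) (j : Fin k),
      I.rPref (Sum.inl v) (Sum.inl ⟨v, t⟩) < I.rPref (Sum.inl v) (Sum.inr j))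
    -- edge-resident e lists the hospital set of one endpoint entirely before the other
    (hr2 : ∀ (e : {e : Sym2 V // e ∈ G.edgeSet}) u w, u ∈ e.1 → w ∈ e.1 → u ≠ w →
      (∀ (t : Fin (G.degree u + 1)) (t' : Fin (G.degree w + 1)),
        I.rPref (Sum.inr e) (Sum.inl ⟨u, t⟩) < I.rPref (Sum.inr e) (Sum.inl ⟨w, t'⟩)) ∨
      (∀ (t : Fin (G.degree w + 1)) (t' : Fin (G.degree u + 1)),
        I.rPref (Sum.inr e) (Sum.inl ⟨w, t⟩) < I.rPref (Sum.inr e) (Sum.inl ⟨u, t'⟩)))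
    -- every hospital in H_v prefers r_v to the incident edge-residents
    (hh : ∀ v (t : Fin (G.degree v + 1)) (e : {e : Sym2 V // e ∈ G.edgeSet}),
      v ∈ e.1 →
      I.hPref (Sum.inl ⟨v, t⟩) (Sum.inl v) < I.hPref (Sum.inl ⟨v, t⟩) (Sum.inr e))
    -- quotas
    (hq1 : ∀ v (t : Fin (G.degree v + 1)),
      I.lq (Sum.inl ⟨v, t⟩) = 0 ∧ I.uq (Sum.inl ⟨v, t⟩) = 1)
    (hq2 : ∀ j : Fin k, I.lq (Sum.inr j) = 1 ∧ I.uq (Sum.inr j) = 1) :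
    (∃ S : Finset V, S.card = k ∧ ∀ u ∈ S, ∀ w ∈ S, ¬ G.Adj u w) ↔
    (∃ M, I.IsMatching M ∧ I.Feasible M ∧ I.EnvyFree M ∧
      HRLQ.msize M = G.edgeFinset.card + Fintype.card V) := by
  have hI : IsIndepSetReduction G k I := ⟨hstrict, hE1, hE2, hE3, hE4, hr1, hr2, hh, hq1, hq2⟩
  constructor
  · rintro ⟨S, hk, hS⟩
    exact hI.exists_envyFree_of_isIndepSet (fun u hu w hw _ => hS u hu w hw) hk
  · rintro ⟨M, hM, hF, hEF, hsize⟩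
    exact hI.exists_isIndepSet_of_envyFree hM hF hEF hsize
end

section
/- In a graph G=(V,E), construct the HRLQ instance G' with, for each vertex v_i with neighbors v_{j1},…,v_{jd}: residents r1^i (list: h1^i), r2^i (list: h2^i, h1^i, h3^i), r3^i (list: h4^i, h2^i, h1^{j1},…,h1^{jd}, h3^i) and hospitals h1^i [0,1] (list: r2^i, r3^{j1},…,r3^{jd}, r1^i), h2^i [0,1] (list: r2^i, r3^i), h3^i [1,1] (list: r3^i, r2^i), h4^i [0,1] (list: r3^i). Then the maximum size of a feasible envy-free matching in G' equals 3|V| minus the size of a minimum vertex cover of G. -/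
open Finset

namespace HRLQ

variable {R H : Type}

theorem msize_add_card_unmatched [Fintype R] [DecidableEq H] (M : R → Option H) :
    msize M + #{r | M r = none} = Fintype.card R := by
  rw [msize, Set.ncard_eq_toFinset_card', Set.toFinset_ofPred, add_comm]
  exact card_filter_add_card_filter_not _ |>.trans card_univ

variable {I : HRLQ R H}

theorem prefersH_some_iff {r : R} {h h' : H} :
    I.PrefersH r h (some h') ↔ I.E r h ∧ I.rPref r h < I.rPref r h' := by
  simp [PrefersH]

theorem Feasible.exists_eq_some {M : R → Option H} (hM : I.Feasible M) {h : H}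
    (hlq : 0 < I.lq h) : ∃ r, M r = some h :=
  Set.nonempty_of_ncard_ne_zero (hlq.trans_le (hM h)).ne'

end HRLQ

theorem Nat.sSup_eq_sub_sInf {A C : Set ℕ} {N : ℕ} (hC : C.Nonempty) (hCA : ∀ c ∈ C, N - c ∈ A)
    (hAC : ∀ n ∈ A, ∃ c ∈ C, n ≤ N - c) : sSup A = N - sInf C := by
  refine IsGreatest.csSup_eq ⟨hCA _ (Nat.sInf_mem hC), fun n hn => ?_⟩
  obtain ⟨c, hc, hnc⟩ := hAC n hn
  exact hnc.trans (Nat.sub_le_sub_left (Nat.sInf_le hc) N)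

/-- Residents `(v, 0), (v, 1), (v, 2)` are `r1ᵛ, r2ᵛ, r3ᵛ`; hospitals `(v, 0), …, (v, 3)` are
`h1ᵛ, …, h4ᵛ`. -/
structure IsVertexCoverReduction {V : Type} (G : SimpleGraph V)
    (I : HRLQ (V × Fin 3) (V × Fin 4)) : Prop where
  accepts_r1 : ∀ v u (j : Fin 4), I.E (v, 0) (u, j) ↔ u = v ∧ j = 0
  accepts_r2 : ∀ v u (j : Fin 4), I.E (v, 1) (u, j) ↔ u = v ∧ (j = 1 ∨ j = 0 ∨ j = 2)
  accepts_r3 : ∀ v u (j : Fin 4), I.E (v, 2) (u, j) ↔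
    (u = v ∧ (j = 3 ∨ j = 1 ∨ j = 2)) ∨ (G.Adj v u ∧ j = 0)
  r2_h2_lt_h1 : ∀ v, I.rPref (v, 1) (v, 1) < I.rPref (v, 1) (v, 0)
  r2_h1_lt_h3 : ∀ v, I.rPref (v, 1) (v, 0) < I.rPref (v, 1) (v, 2)
  r3_h4_lt_h2 : ∀ v, I.rPref (v, 2) (v, 3) < I.rPref (v, 2) (v, 1)
  r3_h2_lt_adj : ∀ v u, G.Adj v u → I.rPref (v, 2) (v, 1) < I.rPref (v, 2) (u, 0)
  r3_adj_lt_h3 : ∀ v u, G.Adj v u → I.rPref (v, 2) (u, 0) < I.rPref (v, 2) (v, 2)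
  r3_h2_lt_h3 : ∀ v, I.rPref (v, 2) (v, 1) < I.rPref (v, 2) (v, 2)
  h1_adj_lt_r1 : ∀ v u, G.Adj v u → I.hPref (v, 0) (u, 2) < I.hPref (v, 0) (v, 0)
  h1_r2_lt_r1 : ∀ v, I.hPref (v, 0) (v, 1) < I.hPref (v, 0) (v, 0)
  h2_r2_lt_r3 : ∀ v, I.hPref (v, 1) (v, 1) < I.hPref (v, 1) (v, 2)
  lq_eq : ∀ v (j : Fin 4), I.lq (v, j) = if j = 2 then 1 else 0
  uq_eq : ∀ v (j : Fin 4), I.uq (v, j) = 1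

open Classical in
noncomputable def coverMatching {V : Type} (S : Set V) : V × Fin 3 → Option (V × Fin 4)
  | (v, 0) => if v ∈ S then none else some (v, 0)
  | (v, 1) => some (v, if v ∈ S then 2 else 1)
  | (v, 2) => some (v, if v ∈ S then 3 else 2)

section coverMatching

variable {V : Type} {S : Set V}

theorem coverMatching_eq_some {r : V × Fin 3} {u : V} {j : Fin 4}
    (h : coverMatching S r = some (u, j)) :
    r.1 = u ∧ (u ∈ S ∧ (r.2 = 1 ∧ j = 2 ∨ r.2 = 2 ∧ j = 3) ∨
      u ∉ S ∧ j = r.2.castSucc) := by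
  obtain ⟨v, i⟩ := r
  fin_cases i <;> by_cases hv : v ∈ S <;> simp_all [coverMatching, eq_comm]

theorem coverMatching_injective {r r' : V × Fin 3} {h : V × Fin 4}
    (hr : coverMatching S r = some h) (hr' : coverMatching S r' = some h) : r = r' := by
  obtain ⟨u, j⟩ := h
  obtain ⟨hr1, hr2⟩ := coverMatching_eq_some hr
  obtain ⟨hr'1, hr'2⟩ := coverMatching_eq_some hr'
  refine Prod.ext (hr1.trans hr'1.symm) ?_
  rcases hr2 with ⟨hu, h⟩ | ⟨hu, rfl⟩ <;> rcases hr'2 with ⟨hu', h'⟩ | ⟨hu', h'⟩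
  · omega
  · exact absurd hu hu'
  · exact absurd hu' hu
  · exact Fin.castSucc_inj.mp h'

theorem notMem_of_coverMatching_eq_some_zero {r : V × Fin 3} {u : V}
    (h : coverMatching S r = some (u, 0)) : u ∉ S := by
  obtain ⟨v, i⟩ := r
  fin_cases i <;> by_cases hv : v ∈ S <;> simp_all [coverMatching]

theorem coverMatching_eq_some_one {r : V × Fin 3} {u : V}
    (h : coverMatching S r = some (u, 1)) : u ∉ S ∧ r = (u, 1) := by
  obtain ⟨v, i⟩ := r
  fin_cases i <;> by_cases hv : v ∈ S <;> simp_all [coverMatching]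

theorem mem_of_coverMatching_eq_some_three {r : V × Fin 3} {u : V}
    (h : coverMatching S r = some (u, 3)) : u ∈ S := by
  obtain ⟨v, i⟩ := r
  fin_cases i <;> by_cases hv : v ∈ S <;> simp_all [coverMatching]

theorem subsingleton_matchedTo_coverMatching (h : V × Fin 4) :
    (HRLQ.matchedTo (coverMatching S) h).Subsingleton :=
  fun _ hr _ hr' => coverMatching_injective hr hr'

theorem msize_coverMatching [Fintype V] (S : Finset V) :
    HRLQ.msize (coverMatching (S : Set V)) = 3 * Fintype.card V - #S := by
  classical
  have hunmatched : #{r | coverMatching (S : Set V) r = none} = #S := by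
    have hS : ({r | coverMatching (S : Set V) r = none} : Finset _) =
        S.map (.sectL V 0) := by
      ext ⟨v, i⟩
      fin_cases i <;> simp [coverMatching]
    rw [hS, card_map]
  have := HRLQ.msize_add_card_unmatched (coverMatching (S : Set V))
  rw [hunmatched, Fintype.card_prod, Fintype.card_fin] at this
  omega

end coverMatching

open Classical in
noncomputable def unmatchedVertices {V ι H : Type} [Fintype V] [Fintype ι]
    (M : V × ι → Option H) : Finset V :=
  image Prod.fst {r | M r = none}

section unmatchedVertices

variable {V ι H : Type} [Fintype V] [Fintype ι]

theorem notMem_unmatchedVertices {M : V × ι → Option H} {v : V} :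
    v ∉ unmatchedVertices M ↔ ∀ i, M (v, i) ≠ none := by
  simp [unmatchedVertices]

theorem msize_le_sub_card_unmatchedVertices (M : V × ι → Option H) :
    HRLQ.msize M ≤ Fintype.card ι * Fintype.card V - #(unmatchedVertices M) := by
  classical
  have hsum := HRLQ.msize_add_card_unmatched M
  have hle : #(unmatchedVertices M) ≤ #{r | M r = none} := card_image_le
  rw [Fintype.card_prod, Nat.mul_comm] at hsum
  omega

end unmatchedVertices

namespace IsVertexCoverReduction

variable {V : Type} {G : SimpleGraph V} {I : HRLQ (V × Fin 3) (V × Fin 4)}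

theorem isMatching_coverMatching (hI : IsVertexCoverReduction G I) (S : Set V) :
    I.IsMatching (coverMatching S) := by
  refine ⟨fun ⟨v, i⟩ ⟨u, j⟩ h => ?_, fun ⟨u, j⟩ => ?_⟩
  · obtain ⟨rfl, hij⟩ := coverMatching_eq_some h
    fin_cases i <;> simp_all [hI.accepts_r1, hI.accepts_r2, hI.accepts_r3] <;> grind
  · have hsub := subsingleton_matchedTo_coverMatching (S := S) (u, j)
    rw [hI.uq_eq]
    exact (Set.ncard_le_one hsub.finite).mpr fun _ hr _ hr' => hsub hr hr'

theorem feasible_coverMatching (hI : IsVertexCoverReduction G I) (S : Set V) :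
    I.Feasible (coverMatching S) := by
  rintro ⟨u, j⟩
  rw [hI.lq_eq]
  split_ifs with hj
  · subst hj
    have hocc : (HRLQ.matchedTo (coverMatching S) (u, 2)).Nonempty := by
      by_cases hu : u ∈ S
      · exact ⟨(u, 1), by simp [HRLQ.matchedTo, coverMatching, hu]⟩
      · exact ⟨(u, 2), by simp [HRLQ.matchedTo, coverMatching, hu]⟩
    exact Nat.one_le_iff_ne_zero.mpr
      ((Set.ncard_pos (subsingleton_matchedTo_coverMatching _).finite).mpr hocc).ne'
  · exact Nat.zero_le _

theorem not_envies_coverMatching_r1 (hI : IsVertexCoverReduction G I) (S : Set V) (w : V)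
    (r' : V × Fin 3) : ¬ I.Envies (coverMatching S) (w, 0) r' := by
  rintro ⟨⟨u, j⟩, hr', ⟨hE, hlt⟩, -⟩
  obtain ⟨rfl, rfl⟩ := (hI.accepts_r1 w u j).1 hE
  have hu := notMem_of_coverMatching_eq_some_zero hr'
  exact (hlt _ (by simp [coverMatching, hu])).false

theorem not_envies_coverMatching_r2 (hI : IsVertexCoverReduction G I) (S : Set V) (w : V)
    (r' : V × Fin 3) : ¬ I.Envies (coverMatching S) (w, 1) r' := by
  rintro ⟨⟨u, j⟩, hr', ⟨hE, hlt⟩, -⟩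
  obtain ⟨rfl, hj⟩ := (hI.accepts_r2 w u j).1 hE
  by_cases hu : u ∈ S
  · have hlt := hlt (u, 2) (by simp [coverMatching, hu])
    rcases hj with rfl | rfl | rfl
    · exact (coverMatching_eq_some_one hr').1 hu
    · exact notMem_of_coverMatching_eq_some_zero hr' hu
    · exact hlt.false
  · have hlt := hlt (u, 1) (by simp [coverMatching, hu])
    have := hI.r2_h2_lt_h1 u
    have := hI.r2_h1_lt_h3 u
    rcases hj with rfl | rfl | rfl <;> omega

theorem not_envies_coverMatching_r3 (hI : IsVertexCoverReduction G I) {S : Set V}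
    (hS : G.IsVertexCover S) (w : V) (r' : V × Fin 3) :
    ¬ I.Envies (coverMatching S) (w, 2) r' := by
  rintro ⟨⟨u, j⟩, hr', ⟨hE, hlt⟩, hrank⟩
  rcases (hI.accepts_r3 w u j).1 hE with ⟨rfl, hj⟩ | ⟨hadj, rfl⟩
  · by_cases hu : u ∈ S
    · have hlt := hlt (u, 3) (by simp [coverMatching, hu])
      have := hI.r3_h4_lt_h2 u
      have := hI.r3_h2_lt_h3 u
      rcases hj with rfl | rfl | rfl <;> omega
    · have hlt := hlt (u, 2) (by simp [coverMatching, hu])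
      rcases hj with rfl | rfl | rfl
      · exact hu (mem_of_coverMatching_eq_some_three hr')
      · obtain ⟨-, rfl⟩ := coverMatching_eq_some_one hr'
        exact (hrank.trans (hI.h2_r2_lt_r3 u)).false
      · exact hlt.false
  · have hw : w ∈ S := (hS hadj).resolve_right (notMem_of_coverMatching_eq_some_zero hr')
    have hlt := hlt (w, 3) (by simp [coverMatching, hw])
    have := hI.r3_h4_lt_h2 w
    have := hI.r3_h2_lt_adj w u hadj
    omega

theorem envyFree_coverMatching (hI : IsVertexCoverReduction G I) {S : Set V}
    (hS : G.IsVertexCover S) : I.EnvyFree (coverMatching S) := by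
  rintro ⟨w, i⟩ r'
  fin_cases i
  exacts [hI.not_envies_coverMatching_r1 S w r', hI.not_envies_coverMatching_r2 S w r',
    hI.not_envies_coverMatching_r3 hS w r']

theorem apply_r1_of_ne_none (hI : IsVertexCoverReduction G I)
    {M : V × Fin 3 → Option (V × Fin 4)} (hM : I.IsMatching M) {v : V}
    (hv : M (v, 0) ≠ none) : M (v, 0) = some (v, 0) := by
  obtain ⟨⟨u, j⟩, hvu⟩ := Option.ne_none_iff_exists'.mp hv
  obtain ⟨rfl, rfl⟩ := (hI.accepts_r1 v u j).1 (hM.1 _ _ hvu)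
  exact hvu

theorem apply_r3_of_envyFree (hI : IsVertexCoverReduction G I)
    {M : V × Fin 3 → Option (V × Fin 4)} (hM : I.IsMatching M) (hF : I.Feasible M)
    (hEF : I.EnvyFree M) {v : V} (hv : M (v, 0) = some (v, 0)) :
    M (v, 2) = some (v, 2) := by
  obtain ⟨⟨w, i⟩, hw⟩ := hF.exists_eq_some (h := (v, 2)) (by simp [hI.lq_eq])
  have hE := hM.1 _ _ hw
  obtain rfl | rfl | rfl : i = 0 ∨ i = 1 ∨ i = 2 := by omega
  · simp [hI.accepts_r1] at hE
  · obtain ⟨rfl, -⟩ := (hI.accepts_r2 w v 2).1 hE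
    refine (hEF (v, 1) (v, 0) ⟨(v, 0), hv, ?_, hI.h1_r2_lt_r1 v⟩).elim
    rw [hw, HRLQ.prefersH_some_iff, hI.accepts_r2]
    exact ⟨by simp, hI.r2_h1_lt_h3 v⟩
  · obtain ⟨rfl, -⟩ | ⟨-, h⟩ := (hI.accepts_r3 w v 2).1 hE
    · exact hw
    · simp at h

theorem isVertexCover_unmatchedVertices [Fintype V] (hI : IsVertexCoverReduction G I)
    {M : V × Fin 3 → Option (V × Fin 4)} (hM : I.IsMatching M) (hF : I.Feasible M)
    (hEF : I.EnvyFree M) : G.IsVertexCover (unmatchedVertices M : Set V) := by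
  intro a b hab
  by_contra! hcover
  obtain ⟨ha, hb⟩ := hcover
  have ha0 := hI.apply_r1_of_ne_none hM (notMem_unmatchedVertices.mp ha 0)
  have ha2 := hI.apply_r3_of_envyFree hM hF hEF ha0
  have hb0 := hI.apply_r1_of_ne_none hM (notMem_unmatchedVertices.mp hb 0)
  refine hEF (a, 2) (b, 0) ⟨(b, 0), hb0, ?_, hI.h1_adj_lt_r1 b a hab.symm⟩
  rw [ha2, HRLQ.prefersH_some_iff, hI.accepts_r3]
  exact ⟨Or.inr ⟨hab, rfl⟩, hI.r3_adj_lt_h3 a b hab⟩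

end IsVertexCoverReduction

theorem max_envy_free_eq_vertex_cover_general
    {V : Type} [Fintype V]
    (G : SimpleGraph V)
    (I : HRLQ (V × Fin 3) (V × Fin 4))
    -- acceptability (resident indices: 0=r1,1=r2,2=r3; hospital: 0=h1,1=h2,2=h3,3=h4)
    (hE1 : ∀ v u (j : Fin 4), I.E (v, 0) (u, j) ↔ u = v ∧ j = 0)
    (hE2 : ∀ v u (j : Fin 4), I.E (v, 1) (u, j) ↔ u = v ∧ (j = 1 ∨ j = 0 ∨ j = 2))
    (hE3 : ∀ v u (j : Fin 4), I.E (v, 2) (u, j) ↔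
      (u = v ∧ (j = 3 ∨ j = 1 ∨ j = 2)) ∨ (G.Adj v u ∧ j = 0))
    -- r2ᵛ: h2ᵛ, h1ᵛ, h3ᵛ
    (hr2a : ∀ v, I.rPref (v, 1) (v, 1) < I.rPref (v, 1) (v, 0))
    (hr2b : ∀ v, I.rPref (v, 1) (v, 0) < I.rPref (v, 1) (v, 2))
    -- r3ᵛ: h4ᵛ, h2ᵛ, the h1's of neighbors in the global order, h3ᵛ
    (hr3a : ∀ v, I.rPref (v, 2) (v, 3) < I.rPref (v, 2) (v, 1))
    (hr3b : ∀ v u, G.Adj v u → I.rPref (v, 2) (v, 1) < I.rPref (v, 2) (u, 0))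
    (hr3d : ∀ v u, G.Adj v u → I.rPref (v, 2) (u, 0) < I.rPref (v, 2) (v, 2))
    (hr3e : ∀ v, I.rPref (v, 2) (v, 1) < I.rPref (v, 2) (v, 2))
    -- h1ᵛ: r2ᵛ, the r3's of neighbors in the global order, r1ᵛ
    (hh1c : ∀ v u, G.Adj v u → I.hPref (v, 0) (u, 2) < I.hPref (v, 0) (v, 0))
    (hh1d : ∀ v, I.hPref (v, 0) (v, 1) < I.hPref (v, 0) (v, 0))
    -- h2ᵛ: r2ᵛ then r3ᵛ
    (hh2 : ∀ v, I.hPref (v, 1) (v, 1) < I.hPref (v, 1) (v, 2))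
    -- quotas: h3ᵛ has quotas [1,1], all others [0,1]
    (hlq : ∀ v (j : Fin 4), I.lq (v, j) = if j = 2 then 1 else 0)
    (huq : ∀ v (j : Fin 4), I.uq (v, j) = 1) :
    sSup {n | ∃ M, I.IsMatching M ∧ I.Feasible M ∧ I.EnvyFree M ∧
        HRLQ.msize M = n} =
      3 * Fintype.card V -
        sInf {c | ∃ S : Finset V, S.card = c ∧
          ∀ u w, G.Adj u w → u ∈ S ∨ w ∈ S} := by
  have hI : IsVertexCoverReduction G I :=
    ⟨hE1, hE2, hE3, hr2a, hr2b, hr3a, hr3b, hr3d, hr3e, hh1c, hh1d, hh2, hlq, huq⟩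
  refine Nat.sSup_eq_sub_sInf ⟨_, univ, rfl, fun u _ _ => Or.inl (mem_univ u)⟩ ?_ ?_
  · rintro _ ⟨S, rfl, hS⟩
    exact ⟨coverMatching S, hI.isMatching_coverMatching S, hI.feasible_coverMatching S,
      hI.envyFree_coverMatching hS, msize_coverMatching S⟩
  · rintro _ ⟨M, hM, hF, hEF, rfl⟩
    exact ⟨_, ⟨_, rfl, hI.isVertexCover_unmatchedVertices hM hF hEF⟩,
      by simpa using msize_le_sub_card_unmatchedVertices M⟩

/-- Vertex cover reduction for MAXEFM: in the reduced HRLQ instance (residents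
r1ⁱ,r2ⁱ,r3ⁱ and hospitals h1ⁱ,h2ⁱ,h3ⁱ,h4ⁱ per vertex vᵢ, with preference lists
r1ⁱ: h1ⁱ; r2ⁱ: h2ⁱ,h1ⁱ,h3ⁱ; r3ⁱ: h4ⁱ,h2ⁱ,h1-neighbors,h3ⁱ;
h1ⁱ [0,1]: r2ⁱ,r3-neighbors,r1ⁱ; h2ⁱ [0,1]: r2ⁱ,r3ⁱ; h3ⁱ [1,1]: r3ⁱ,r2ⁱ;
h4ⁱ [0,1]: r3ⁱ, using a fixed global vertex ordering), the maximum size of a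
feasible envy-free matching equals 3|V| minus the minimum size of a vertex
cover of G. -/
theorem max_envy_free_eq_vertex_cover
    {V : Type} [Fintype V] [LinearOrder V]
    (G : SimpleGraph V) [DecidableRel G.Adj]
    (I : HRLQ (V × Fin 3) (V × Fin 4))
    (hstrict : I.StrictPrefs)
    -- acceptability (resident indices: 0=r1,1=r2,2=r3; hospital: 0=h1,1=h2,2=h3,3=h4)
    (hE1 : ∀ v u (j : Fin 4), I.E (v, 0) (u, j) ↔ u = v ∧ j = 0)
    (hE2 : ∀ v u (j : Fin 4), I.E (v, 1) (u, j) ↔ u = v ∧ (j = 1 ∨ j = 0 ∨ j = 2))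
    (hE3 : ∀ v u (j : Fin 4), I.E (v, 2) (u, j) ↔
      (u = v ∧ (j = 3 ∨ j = 1 ∨ j = 2)) ∨ (G.Adj v u ∧ j = 0))
    -- r2ᵛ: h2ᵛ, h1ᵛ, h3ᵛ
    (hr2a : ∀ v, I.rPref (v, 1) (v, 1) < I.rPref (v, 1) (v, 0))
    (hr2b : ∀ v, I.rPref (v, 1) (v, 0) < I.rPref (v, 1) (v, 2))
    -- r3ᵛ: h4ᵛ, h2ᵛ, the h1's of neighbors in the global order, h3ᵛ
    (hr3a : ∀ v, I.rPref (v, 2) (v, 3) < I.rPref (v, 2) (v, 1))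
    (hr3b : ∀ v u, G.Adj v u → I.rPref (v, 2) (v, 1) < I.rPref (v, 2) (u, 0))
    (hr3c : ∀ v u w, G.Adj v u → G.Adj v w → u < w →
      I.rPref (v, 2) (u, 0) < I.rPref (v, 2) (w, 0))
    (hr3d : ∀ v u, G.Adj v u → I.rPref (v, 2) (u, 0) < I.rPref (v, 2) (v, 2))
    (hr3e : ∀ v, I.rPref (v, 2) (v, 1) < I.rPref (v, 2) (v, 2))
    -- h1ᵛ: r2ᵛ, the r3's of neighbors in the global order, r1ᵛ
    (hh1a : ∀ v u, G.Adj v u → I.hPref (v, 0) (v, 1) < I.hPref (v, 0) (u, 2))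
    (hh1b : ∀ v u w, G.Adj v u → G.Adj v w → u < w →
      I.hPref (v, 0) (u, 2) < I.hPref (v, 0) (w, 2))
    (hh1c : ∀ v u, G.Adj v u → I.hPref (v, 0) (u, 2) < I.hPref (v, 0) (v, 0))
    (hh1d : ∀ v, I.hPref (v, 0) (v, 1) < I.hPref (v, 0) (v, 0))
    -- h2ᵛ: r2ᵛ then r3ᵛ
    (hh2 : ∀ v, I.hPref (v, 1) (v, 1) < I.hPref (v, 1) (v, 2))
    -- h3ᵛ: r3ᵛ then r2ᵛ
    (hh3 : ∀ v, I.hPref (v, 2) (v, 2) < I.hPref (v, 2) (v, 1))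
    -- quotas: h3ᵛ has quotas [1,1], all others [0,1]
    (hlq : ∀ v (j : Fin 4), I.lq (v, j) = if j = 2 then 1 else 0)
    (huq : ∀ v (j : Fin 4), I.uq (v, j) = 1) :
    sSup {n | ∃ M, I.IsMatching M ∧ I.Feasible M ∧ I.EnvyFree M ∧
        HRLQ.msize M = n} =
      3 * Fintype.card V -
        sInf {c | ∃ S : Finset V, S.card = c ∧
          ∀ u w, G.Adj u w → u ∈ S ∨ w ∈ S} :=
  max_envy_free_eq_vertex_cover_general G I hE1 hE2 hE3 hr2a hr2b hr3a hr3b hr3d hr3e hh1c hh1d hh2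
    hlq huq
end

section
/- In an HRLQ instance where every resident's preference list has length at most ℓ₁ and every hospital's preference list has length at most ℓ₂ (with arbitrary quotas), every maximal feasible envy-free matching M satisfies |OPT| ≤ ℓ₁·ℓ₂·|M|, where OPT is a maximum-size feasible envy-free matching. -/
theorem Set.ncard_biUnion_le_ncard_mul {ι α : Type*} {t : Set ι} (ht : t.Finite) {s : ι → Set α}
    {k : ℕ} (hs : ∀ i ∈ t, (s i).ncard ≤ k) : (⋃ i ∈ t, s i).ncard ≤ t.ncard * k := by
  lift t to Finset ι using ht
  calc (⋃ i ∈ (t : Set ι), s i).ncard ≤ ∑ i ∈ t, (s i).ncard := by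
        simpa using t.set_ncard_biUnion_le s
    _ ≤ ∑ _i ∈ t, k := Finset.sum_le_sum hs
    _ = (t : Set ι).ncard * k := by simp

theorem ncard_le_mul_of_forall_exists_common_neighbor {R H : Type*} [Finite R] [Finite H]
    (E : R → H → Prop) {ℓ₁ ℓ₂ : ℕ} (hdeg₁ : ∀ r, {h | E r h}.ncard ≤ ℓ₁)
    (hdeg₂ : ∀ h, {r | E r h}.ncard ≤ ℓ₂) {A B : Set R}
    (hAB : ∀ r ∈ A, ∃ s ∈ B, ∃ h, E s h ∧ E r h) :
    A.ncard ≤ ℓ₁ * ℓ₂ * B.ncard := by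
  have hball : ∀ s, (⋃ h ∈ {h | E s h}, {r | E r h}).ncard ≤ ℓ₁ * ℓ₂ := fun s =>
    calc (⋃ h ∈ {h | E s h}, {r | E r h}).ncard ≤ {h | E s h}.ncard * ℓ₂ :=
          Set.ncard_biUnion_le_ncard_mul (Set.toFinite _) fun h _ => hdeg₂ h
      _ ≤ ℓ₁ * ℓ₂ := Nat.mul_le_mul_right _ (hdeg₁ s)
  have hcover : A ⊆ ⋃ s ∈ B, ⋃ h ∈ {h | E s h}, {r | E r h} := by
    intro r hr
    obtain ⟨s, hs, h, hsh, hrh⟩ := hAB r hr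
    simp only [Set.mem_iUnion]
    exact ⟨s, hs, h, hsh, hrh⟩
  calc A.ncard ≤ (⋃ s ∈ B, ⋃ h ∈ {h | E s h}, {r | E r h}).ncard := Set.ncard_le_ncard hcover
    _ ≤ B.ncard * (ℓ₁ * ℓ₂) := Set.ncard_biUnion_le_ncard_mul (Set.toFinite _) fun s _ => hball s
    _ = ℓ₁ * ℓ₂ * B.ncard := Nat.mul_comm _ _

namespace HRLQ

variable {R H : Type} {M : R → Option H} {r : R} {h : H}

theorem IsMatching.uq_pos [Finite R] {I : HRLQ R H} (hM : I.IsMatching M) (hr : M r = some h) :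
    0 < I.uq h :=
  ((Set.ncard_pos (Set.toFinite _)).mpr ⟨r, hr⟩).trans_le (hM.2 h)

variable [DecidableEq R]

theorem matchedTo_update_self (hr : M r = none) :
    matchedTo (Function.update M r (some h)) h = insert r (matchedTo M h) := by
  ext s
  by_cases hs : s = r
  · subst hs; simp [matchedTo]
  · simp [matchedTo, hs]

theorem matchedTo_update_of_ne (hr : M r = none) {h' : H} (hh : h' ≠ h) :
    matchedTo (Function.update M r (some h)) h' = matchedTo M h' := by
  ext s
  by_cases hs : s = r
  · subst hs; simp [matchedTo, hr, Ne.symm hh]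
  · simp [matchedTo, Function.update_of_ne hs]

variable {I : HRLQ R H}

theorem IsMatching.update (hM : I.IsMatching M) (hr : M r = none) (hE : I.E r h)
    (hcap : (matchedTo M h).ncard < I.uq h) :
    I.IsMatching (Function.update M r (some h)) := by
  refine ⟨fun s h' hs => ?_, fun h' => ?_⟩
  · by_cases hsr : s = r
    · subst hsr
      obtain rfl : h = h' := by simpa using hs
      exact hE
    · exact hM.1 s h' (by rwa [Function.update_of_ne hsr] at hs)
  · by_cases hh : h' = h
    · subst hh
      rw [matchedTo_update_self hr]
      exact (Set.ncard_insert_le _ _).trans hcap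
    · rw [matchedTo_update_of_ne hr hh]
      exact hM.2 h'

theorem EnvyFree.update (hM : I.EnvyFree M) (hr : M r = none)
    (hbest : ∀ a, I.PrefersH a h (M a) → I.hPref h r ≤ I.hPref h a) :
    I.EnvyFree (Function.update M r (some h)) := by
  rintro a b ⟨h', hb, hpref, hrank⟩
  by_cases hbr : b = r
  · subst hbr
    obtain rfl : h = h' := by simpa using hb
    have hab : a ≠ b := fun hab => (hab ▸ hrank).false
    rw [Function.update_of_ne hab] at hpref
    exact (hbest a hpref).not_gt hrank
  · rw [Function.update_of_ne hbr] at hb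
    by_cases har : a = r
    · subst har
      rw [Function.update_self] at hpref
      exact hM a b ⟨h', hb, ⟨hpref.1, by simp [hr]⟩, hrank⟩
    · rw [Function.update_of_ne har] at hpref
      exact hM a b ⟨h', hb, hpref, hrank⟩

theorem exists_matched_of_maximal (hM : I.IsMatching M) (hef : I.EnvyFree M)
    (hmax : ∀ r h, M r = none → I.E r h →
      ¬ (I.IsMatching (Function.update M r (some h)) ∧
         I.EnvyFree (Function.update M r (some h))))
    (hE : I.E r h) (hq : 0 < I.uq h) : ∃ s, M s ≠ none ∧ I.E s h := by
  by_contra! hnone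
  have hS : {a | I.PrefersH a h (M a)}.Nonempty :=
    ⟨r, hE, fun h' hr' => absurd hE (hnone r (by simp [hr']))⟩
  obtain ⟨r₀, hr₀, hmin⟩ : ∃ r₀ ∈ {a | I.PrefersH a h (M a)}, ∀ a ∈ {a | I.PrefersH a h (M a)},
      I.hPref h r₀ ≤ I.hPref h a :=
    ⟨_, Function.argminOn_mem _ _ hS, fun a ha => Function.argminOn_le _ _ ha⟩
  have hr₀_none : M r₀ = none := by
    by_contra hne
    exact hnone r₀ hne hr₀.1
  have hempty : matchedTo M h = ∅ :=
    Set.eq_empty_of_forall_notMem fun s hs =>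
      hnone s (by simp [show M s = some h from hs]) (hM.1 s h hs)
  refine hmax r₀ h hr₀_none hr₀.1 ⟨hM.update hr₀_none hr₀.1 (by simpa [hempty]), ?_⟩
  exact hef.update hr₀_none hmin

end HRLQ

theorem maximal_envy_free_ell1_ell2_approx_general
    {R H : Type} [Fintype R] [Fintype H] [DecidableEq R] (I : HRLQ R H)
    (ℓ₁ ℓ₂ : ℕ)
    (hlen₁ : ∀ r, {h | I.E r h}.ncard ≤ ℓ₁)
    (hlen₂ : ∀ h, {r | I.E r h}.ncard ≤ ℓ₂)
    (M : R → Option H)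
    (hM : I.IsMatching M ∧ I.Feasible M ∧ I.EnvyFree M)
    (hmaximal : ∀ r h, M r = none → I.E r h →
      ¬ (I.IsMatching (Function.update M r (some h)) ∧
         I.EnvyFree (Function.update M r (some h)))) :
    ∀ OPT, I.IsMatching OPT → I.Feasible OPT → I.EnvyFree OPT →
      HRLQ.msize OPT ≤ ℓ₁ * ℓ₂ * HRLQ.msize M := by
  intro OPT hOPT _ _
  obtain ⟨hMmatch, -, hMef⟩ := hM
  refine ncard_le_mul_of_forall_exists_common_neighbor I.E hlen₁ hlen₂ fun r hr => ?_
  obtain ⟨h, hrh⟩ := Option.ne_none_iff_exists'.mp hr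
  have hE : I.E r h := hOPT.1 r h hrh
  obtain ⟨s, hs, hsh⟩ :=
    HRLQ.exists_matched_of_maximal hMmatch hMef hmaximal hE (hOPT.uq_pos hrh)
  exact ⟨s, hs, h, hsh, hE⟩

/-- In an HRLQ instance with resident lists of length at most ℓ₁ and hospital lists
of length at most ℓ₂ (arbitrary quotas), every maximal feasible envy-free matching
M is an (ℓ₁·ℓ₂)-approximation of a maximum-size feasible envy-free matching. -/
theorem maximal_envy_free_ell1_ell2_approx
    {R H : Type} [Fintype R] [Fintype H] [DecidableEq R] (I : HRLQ R H)
    (hstrict : I.StrictPrefs) (ℓ₁ ℓ₂ : ℕ)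
    (hlen₁ : ∀ r, {h | I.E r h}.ncard ≤ ℓ₁)
    (hlen₂ : ∀ h, {r | I.E r h}.ncard ≤ ℓ₂)
    (M : R → Option H)
    (hM : I.IsMatching M ∧ I.Feasible M ∧ I.EnvyFree M)
    (hmaximal : ∀ r h, M r = none → I.E r h →
      ¬ (I.IsMatching (Function.update M r (some h)) ∧
         I.EnvyFree (Function.update M r (some h)))) :
    ∀ OPT, I.IsMatching OPT → I.Feasible OPT → I.EnvyFree OPT →
      HRLQ.msize OPT ≤ ℓ₁ * ℓ₂ * HRLQ.msize M :=
  maximal_envy_free_ell1_ell2_approx_general I ℓ₁ ℓ₂ hlen₁ hlen₂ M hM hmaximal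
end
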